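/- Let M = ((A, B), (C, D)) ∈ Sp(ℝ^{2D}, ω) (in D×D blocks) and let α, β ∈ ℝ. Then M Z_Ω M⁻¹ = ((0, αΣ), (βΣ, 0)) if and only if B Dᵀ + (4Ω²/θ²) A Cᵀ = 0, B Bᵀ + (4Ω²/θ²) A Aᵀ = α·1, and D Dᵀ + (4Ω²/θ²) C Cᵀ = β·1 (with 1 the D×D identity matrix). In particular, M leaves Z_Ω covariant in the sense of Langmann–Szabo exactly when these three conditions hold for some α, β ∈ ℝ. -/

import Mathlib

open Matrix

noncomputable section

/-- The standard symplectic matrix `Σ` on `ℝ^D`: block-diagonal with `D/2` blocks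
`((0, -1), (1, 0))`. -/
def stdSigma (D : ℕ) : Matrix (Fin D) (Fin D) ℝ := fun i j =>
  if i.val % 2 = 1 ∧ i.val = j.val + 1 then 1
  else if j.val % 2 = 1 ∧ j.val = i.val + 1 then -1 else 0

/-- The symplectic form `ω = ((0, Σ), (Σ, 0))` on the phase space `ℝ^{2D}`. -/
def omegaMat (D : ℕ) : Matrix (Fin D ⊕ Fin D) (Fin D ⊕ Fin D) ℝ :=
  Matrix.fromBlocks 0 (stdSigma D) (stdSigma D) 0

/-- `Z_Ω = ((0, (4Ω²/θ²)Σ), (Σ, 0))`. -/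
def ZOmega (D : ℕ) (θ Ω : ℝ) : Matrix (Fin D ⊕ Fin D) (Fin D ⊕ Fin D) ℝ :=
  Matrix.fromBlocks 0 ((4 * Ω ^ 2 / θ ^ 2) • stdSigma D) (stdSigma D) 0

/-!
Since `ω² = -1`, a matrix `M` with `Mᵀ ω M = ω` has inverse `M⁻¹ = -ω Mᵀ ω`. Multiplying on the
right by the invertible `ω`, the equation `M Z_Ω M⁻¹ = W` for `W = ((0, αΣ), (βΣ, 0))` becomes the
congruence `M (Z_Ω ω) Mᵀ = W ω`, and both `Z_Ω ω = -diag((4Ω²/θ²)·1, 1)` and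
`W ω = -diag(α·1, β·1)` are block diagonal. Comparing blocks gives the three conditions; the
lower-left block equation is the transpose of the upper-right one.
-/

lemma mul_mul_inv_eq_iff_of_transpose_mul_mul_eq {n R : Type*} [Fintype n] [DecidableEq n]
    [CommRing R] {J M Z W : Matrix n n R} (hJ : J * J = -1)
    (hM : Mᵀ * J * M = J) :
    M * Z * M⁻¹ = W ↔ M * (Z * J) * Mᵀ = W * J := by
  have hinv : M⁻¹ = -(J * Mᵀ * J) := inv_eq_left_inv <| by
    rw [neg_mul, Matrix.mul_assoc, Matrix.mul_assoc, ← Matrix.mul_assoc Mᵀ, hM, hJ, neg_neg]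
  have hJunit : IsUnit J := IsUnit.of_mul_eq_one (-J) (by rw [mul_neg, hJ, neg_neg])
  rw [← hJunit.mul_left_inj, hinv]
  simp only [mul_neg, neg_mul, Matrix.mul_assoc, hJ, mul_one, neg_neg]

lemma fromBlocks_mul_fromBlocks_diagonal_mul_transpose {n R : Type*} [Fintype n] [DecidableEq n]
    [CommRing R] (A B C D : Matrix n n R) (k : R) :
    fromBlocks A B C D * fromBlocks (k • 1) 0 0 1 * (fromBlocks A B C D)ᵀ =
      fromBlocks (B * Bᵀ + k • (A * Aᵀ)) (B * Dᵀ + k • (A * Cᵀ))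
        (D * Bᵀ + k • (C * Aᵀ)) (D * Dᵀ + k • (C * Cᵀ)) := by
  simp only [fromBlocks_transpose, fromBlocks_multiply, Matrix.mul_smul, Matrix.smul_mul,
    Matrix.mul_one, Matrix.mul_zero, add_zero, zero_add]
  congr 1 <;> abel

lemma stdSigma_mul_self {D : ℕ} (hD : Even D) : stdSigma D * stdSigma D = -1 := by
  ext i k
  obtain ⟨m, hm⟩ := hD
  -- the only nonzero entry of row `i` sits in the column of its partner `i ^^^ 1`
  let p : Fin D := ⟨if i.val % 2 = 0 then i.val + 1 else i.val - 1, by split_ifs <;> omega⟩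
  rw [mul_apply, Finset.sum_eq_single p]
  · rw [neg_apply, one_apply]
    simp only [stdSigma, p, Fin.ext_iff]
    split_ifs <;> first | omega | norm_num
  · intro j _ hj
    simp only [stdSigma, p, ne_eq, Fin.ext_iff] at hj ⊢
    split_ifs at hj ⊢ <;> first | omega | norm_num
  · simp

lemma omegaMat_mul_self {D : ℕ} (hD : Even D) : omegaMat D * omegaMat D = -1 := by
  simp [omegaMat, fromBlocks_multiply, stdSigma_mul_self hD, ← fromBlocks_one, fromBlocks_neg]

lemma antidiag_stdSigma_mul_omegaMat {D : ℕ} (hD : Even D) (a b : ℝ) :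
    fromBlocks 0 (a • stdSigma D) (b • stdSigma D) 0 * omegaMat D =
      -fromBlocks (a • 1) 0 0 (b • 1) := by
  simp [omegaMat, fromBlocks_multiply, stdSigma_mul_self hD, fromBlocks_neg]

lemma ZOmega_mul_omegaMat {D : ℕ} (hD : Even D) (θ Ω : ℝ) :
    ZOmega D θ Ω * omegaMat D = -fromBlocks ((4 * Ω ^ 2 / θ ^ 2) • 1) 0 0 1 := by
  simpa [ZOmega] using antidiag_stdSigma_mul_omegaMat hD (4 * Ω ^ 2 / θ ^ 2) 1

theorem ZOmega_covariance_iff_general (D : ℕ) (hDeven : Even D)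
    (θ : ℝ) (Ω : ℝ) (α β : ℝ)
    (A B C D' : Matrix (Fin D) (Fin D) ℝ)
    (hM : (Matrix.fromBlocks A B C D')ᵀ * omegaMat D * Matrix.fromBlocks A B C D'
      = omegaMat D) :
    (Matrix.fromBlocks A B C D' * ZOmega D θ Ω * (Matrix.fromBlocks A B C D')⁻¹
        = Matrix.fromBlocks 0 (α • stdSigma D) (β • stdSigma D) 0) ↔
      (B * D'ᵀ + (4 * Ω ^ 2 / θ ^ 2) • (A * Cᵀ) = 0 ∧
       B * Bᵀ + (4 * Ω ^ 2 / θ ^ 2) • (A * Aᵀ) = α • (1 : Matrix (Fin D) (Fin D) ℝ) ∧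
       D' * D'ᵀ + (4 * Ω ^ 2 / θ ^ 2) • (C * Cᵀ) = β • (1 : Matrix (Fin D) (Fin D) ℝ)) := by
  rw [mul_mul_inv_eq_iff_of_transpose_mul_mul_eq (omegaMat_mul_self hDeven) hM,
    ZOmega_mul_omegaMat hDeven, antidiag_stdSigma_mul_omegaMat hDeven, mul_neg, neg_mul, neg_inj,
    fromBlocks_mul_fromBlocks_diagonal_mul_transpose, fromBlocks_inj]
  have hsymm : D' * Bᵀ + (4 * Ω ^ 2 / θ ^ 2) • (C * Aᵀ) =
      (B * D'ᵀ + (4 * Ω ^ 2 / θ ^ 2) • (A * Cᵀ))ᵀ := by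
    simp [transpose_add, transpose_mul]
  rw [hsymm, transpose_eq_zero]
  tauto

/-- a symplectic block matrix `M = ((A, B), (C, D))` conjugates `Z_Ω` to
`((0, αΣ), (βΣ, 0))` iff `BDᵀ + (4Ω²/θ²)ACᵀ = 0`, `BBᵀ + (4Ω²/θ²)AAᵀ = α·1` and
`DDᵀ + (4Ω²/θ²)CCᵀ = β·1`. -/
theorem ZOmega_covariance_iff (D : ℕ) (hD : 0 < D) (hDeven : Even D)
    (θ : ℝ) (hθ : 0 < θ) (Ω : ℝ) (α β : ℝ)
    (A B C D' : Matrix (Fin D) (Fin D) ℝ)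
    (hM : (Matrix.fromBlocks A B C D')ᵀ * omegaMat D * Matrix.fromBlocks A B C D'
      = omegaMat D) :
    (Matrix.fromBlocks A B C D' * ZOmega D θ Ω * (Matrix.fromBlocks A B C D')⁻¹
        = Matrix.fromBlocks 0 (α • stdSigma D) (β • stdSigma D) 0) ↔
      (B * D'ᵀ + (4 * Ω ^ 2 / θ ^ 2) • (A * Cᵀ) = 0 ∧
       B * Bᵀ + (4 * Ω ^ 2 / θ ^ 2) • (A * Aᵀ) = α • (1 : Matrix (Fin D) (Fin D) ℝ) ∧
       D' * D'ᵀ + (4 * Ω ^ 2 / θ ^ 2) • (C * Cᵀ) = β • (1 : Matrix (Fin D) (Fin D) ℝ)) :=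
  ZOmega_covariance_iff_general D hDeven θ Ω α β A B C D' hM
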